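/- arXiv:0807.1654 — 6 statements merged into one kernel-verified Lean document; each statement's English description precedes it below -/
import Mathlib

section
/- Let R be an F-finite ring of characteristic p > 0 and I ⊆ R a uniformly F-compatible ideal. Suppose that for some e > 0 there is an R-linear map φ : F^e_* R → R with φ(1) = 1 (i.e., R is F-split). Then φ induces a splitting of Frobenius on R/I; in particular R/I is F-pure and I is a radical ideal. -/
/-- An additive map `φ : R → R` viewed as an `R`-linear map `F^e_* R → R` (with `q = p^e`):
it satisfies `φ(r^q · x) = r · φ(x)`. -/
def IsPeLinear (R : Type*) [CommRing R] (q : ℕ) (φ : R → R) : Prop :=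
  (∀ x y : R, φ (x + y) = φ x + φ y) ∧ ∀ r x : R, φ (r ^ q * x) = r * φ x

/-- An ideal `I ⊆ R` is uniformly `F`-compatible if for every `e > 0` and every
`R`-linear map `φ : F^e_* R → R` one has `φ(F^e_* I) ⊆ I`. -/
def UnifFCompat (R : Type*) [CommRing R] (p : ℕ) (I : Ideal R) : Prop :=
  ∀ e : ℕ, 0 < e → ∀ φ : R → R, IsPeLinear R (p ^ e) φ → ∀ x ∈ I, φ x ∈ I

/-- `R` is `F`-finite: `R` is module-finite over itself via the Frobenius. -/
def FFinite (R : Type*) [CommRing R] (p : ℕ) [Fact p.Prime] [CharP R p] : Prop :=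
  RingHom.Finite (frobenius R p)

/-! Uniform compatibility gives `φ(I) ⊆ I`, so `φ` descends to `R ⧸ I`; and since
`φ(r ^ q) = r · φ(1) = r`, a compatible splitting carries `r ^ q ∈ I` to `r ∈ I`. -/

namespace IsPeLinear

variable {R : Type*} [CommRing R] {q : ℕ} {φ : R → R}

theorem map_sub (hφ : IsPeLinear R q φ) (x y : R) : φ (x - y) = φ x - φ y :=
  _root_.map_sub (AddMonoidHom.mk' φ hφ.1) x y

theorem map_pow_eq_self (hφ : IsPeLinear R q φ) (h1 : φ 1 = 1) (r : R) : φ (r ^ q) = r := by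
  simpa [h1] using hφ.2 r 1

theorem isRadical_of_map_one (hφ : IsPeLinear R q φ) {I : Ideal R} (hI : ∀ x ∈ I, φ x ∈ I)
    (hq : 1 < q) (h1 : φ 1 = 1) : I.IsRadical := by
  rw [Ideal.isRadical_iff_pow_one_lt q hq]
  intro r hr
  simpa only [hφ.map_pow_eq_self h1] using hI _ hr

def quotientMap (hφ : IsPeLinear R q φ) (I : Ideal R) (hI : ∀ x ∈ I, φ x ∈ I) :
    R ⧸ I → R ⧸ I :=
  Quotient.lift (fun a => Ideal.Quotient.mk I (φ a)) fun a b hab => by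
    rw [Ideal.Quotient.eq, ← hφ.map_sub]
    exact hI _ (Ideal.Quotient.eq.mp (Quotient.sound hab))

variable (hφ : IsPeLinear R q φ) {I : Ideal R} (hI : ∀ x ∈ I, φ x ∈ I)

@[simp]
theorem quotientMap_mk (x : R) :
    hφ.quotientMap I hI (Ideal.Quotient.mk I x) = Ideal.Quotient.mk I (φ x) :=
  rfl

theorem isPeLinear_quotientMap : IsPeLinear (R ⧸ I) q (hφ.quotientMap I hI) := by
  refine ⟨fun x y => ?_, fun r x => ?_⟩
  · obtain ⟨a, rfl⟩ := Ideal.Quotient.mk_surjective x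
    obtain ⟨b, rfl⟩ := Ideal.Quotient.mk_surjective y
    simp only [← map_add, quotientMap_mk, hφ.1]
  · obtain ⟨a, rfl⟩ := Ideal.Quotient.mk_surjective r
    obtain ⟨b, rfl⟩ := Ideal.Quotient.mk_surjective x
    simp only [← map_pow, ← map_mul, quotientMap_mk, hφ.2]

theorem quotientMap_one (h1 : φ 1 = 1) : hφ.quotientMap I hI 1 = 1 := by
  rw [← map_one (Ideal.Quotient.mk I), quotientMap_mk, h1]

end IsPeLinear

theorem quotient_split_of_unifFCompat_general {R : Type*} [CommRing R] (p : ℕ) [Fact p.Prime]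
    (I : Ideal R) (hI : UnifFCompat R p I)
    (e : ℕ) (he : 0 < e) (φ : R → R) (hφ : IsPeLinear R (p ^ e) φ) (h1 : φ 1 = 1) :
    (∃ ψ : R ⧸ I → R ⧸ I, IsPeLinear (R ⧸ I) (p ^ e) ψ ∧ ψ 1 = 1 ∧
      ∀ x : R, ψ (Ideal.Quotient.mk I x) = Ideal.Quotient.mk I (φ x)) ∧
    I.IsRadical := by
  have hφI : ∀ x ∈ I, φ x ∈ I := hI e he φ hφ
  have hq : 1 < p ^ e := Nat.one_lt_pow he.ne' (Fact.out : p.Prime).one_lt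
  exact ⟨⟨hφ.quotientMap I hφI, hφ.isPeLinear_quotientMap hφI, hφ.quotientMap_one hφI h1,
    hφ.quotientMap_mk hφI⟩, hφ.isRadical_of_map_one hφI hq h1⟩

/-- If `I` is uniformly `F`-compatible and some `R`-linear `φ : F^e_* R → R` sends
`1` to `1` (i.e. `R` is `F`-split), then `φ` induces a Frobenius splitting of `R/I`;
in particular `R/I` is `F`-pure and `I` is radical. -/
theorem quotient_split_of_unifFCompat {R : Type*} [CommRing R] (p : ℕ) [Fact p.Prime]
    [CharP R p] (hFF : FFinite R p) (I : Ideal R) (hI : UnifFCompat R p I)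
    (e : ℕ) (he : 0 < e) (φ : R → R) (hφ : IsPeLinear R (p ^ e) φ) (h1 : φ 1 = 1) :
    (∃ ψ : R ⧸ I → R ⧸ I, IsPeLinear (R ⧸ I) (p ^ e) ψ ∧ ψ 1 = 1 ∧
      ∀ x : R, ψ (Ideal.Quotient.mk I x) = Ideal.Quotient.mk I (φ x)) ∧
    I.IsRadical :=
  quotient_split_of_unifFCompat_general p I hI e he φ hφ h1
end

section
/- Let R be an F-finite ring of characteristic p > 0, T ⊆ R a multiplicative set, f : R → T^{-1}R the localization map, and I ⊆ T^{-1}R a uniformly F-compatible ideal. Then f^{-1}(I) is a uniformly F-compatible ideal of R. -/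
/-!
With `q = p^e`, a `q`-linear map `φ` on `R` localizes: `ψ (a / b) = φ (a b^(q-1)) / b` is
well defined and `q`-linear on `T⁻¹R`, because `b^(q-1) = b^q / b` and `φ` pulls `q`-th powers
out as scalars. Since `ψ` extends `φ` along `R → T⁻¹R`, compatibility of `I` with `ψ` gives
compatibility of its contraction with `φ`.
-/

namespace IsPeLinear

variable {R : Type*} [CommRing R] {q : ℕ} {φ : R → R}

theorem map_pow_pred_mul (hφ : IsPeLinear R q φ) (hq : q ≠ 0) (t y : R) :
    φ (t ^ (q - 1) * (t * y)) = t * φ y := by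
  rw [← mul_assoc, pow_sub_one_mul hq, hφ.2]

variable {T : Submonoid R}

theorem mk_eq_mk_of_r (hφ : IsPeLinear R q φ) (hq : q ≠ 0) {a c : R} {b d : T}
    (h : Localization.r T (a, b) (c, d)) :
    (Localization.mk (φ (a * b ^ (q - 1))) b : Localization T) =
      Localization.mk (φ (c * d ^ (q - 1))) d := by
  obtain ⟨u, hu⟩ := Localization.r_iff_exists.mp h
  rw [Localization.mk_eq_mk_iff, Localization.r_iff_exists]
  refine ⟨u, ?_⟩
  have scale : ∀ (s t y : R), (u : R) * (t * φ (y * s ^ (q - 1))) =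
      φ ((u * s * t) ^ (q - 1) * (u * (t * y))) := fun s t y => by
    rw [← mul_assoc, ← hφ.map_pow_pred_mul hq]
    congr 1
    ring
  rw [scale, scale, mul_right_comm (u : R) (d : R), ← hu]

def localization (hφ : IsPeLinear R q φ) (hq : q ≠ 0) : Localization T → Localization T :=
  fun z => z.liftOn (fun a b => .mk (φ (a * b ^ (q - 1))) b) (hφ.mk_eq_mk_of_r hq)

@[simp]
theorem localization_mk (hφ : IsPeLinear R q φ) (hq : q ≠ 0) (a : R) (b : T) :
    hφ.localization hq (.mk a b) = .mk (φ (a * b ^ (q - 1))) b :=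
  rfl

theorem localization_add (hφ : IsPeLinear R q φ) (hq : q ≠ 0) (z w : Localization T) :
    hφ.localization hq (z + w) = hφ.localization hq z + hφ.localization hq w := by
  induction z using Localization.induction_on with | _ z => ?_
  induction w using Localization.induction_on with | _ w => ?_
  obtain ⟨a, b⟩ := z
  obtain ⟨c, d⟩ := w
  simp only [Localization.add_mk, localization_mk]
  rw [← hφ.map_pow_pred_mul hq, ← hφ.map_pow_pred_mul hq, ← hφ.1]
  congr 2
  push_cast
  ring

theorem localization_pow_mul (hφ : IsPeLinear R q φ) (hq : q ≠ 0) (y z : Localization T) :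
    hφ.localization hq (y ^ q * z) = y * hφ.localization hq z := by
  induction y using Localization.induction_on with | _ y => ?_
  induction z using Localization.induction_on with | _ z => ?_
  obtain ⟨s, v⟩ := y
  obtain ⟨r, t⟩ := z
  have hpow : (v : R) ^ q = v ^ (q - 1) * v := (pow_sub_one_mul hq _).symm
  have expand : s ^ q * r * ((v ^ q * t : T) : R) ^ (q - 1) =
      (s * v ^ (q - 1)) ^ q * (r * t ^ (q - 1)) := by
    push_cast
    ring
  simp only [Localization.mk_pow, Localization.mk_mul, localization_mk]
  rw [expand, hφ.2, Localization.mk_eq_mk_iff, Localization.r_iff_exists]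
  refine ⟨1, ?_⟩
  push_cast
  rw [hpow]
  ring

theorem isPeLinear_localization (hφ : IsPeLinear R q φ) (hq : q ≠ 0) :
    IsPeLinear (Localization T) q (hφ.localization hq) :=
  ⟨hφ.localization_add hq, hφ.localization_pow_mul hq⟩

theorem localization_algebraMap (hφ : IsPeLinear R q φ) (hq : q ≠ 0) (x : R) :
    hφ.localization hq (algebraMap R (Localization T) x) = algebraMap R _ (φ x) := by
  simp [← Localization.mk_one_eq_algebraMap]

end IsPeLinear

theorem unifFCompat_comap_localization_general {R : Type*} [CommRing R] (p : ℕ) [Fact p.Prime]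
    (T : Submonoid R) (I : Ideal (Localization T))
    (hI : UnifFCompat (Localization T) p I) :
    UnifFCompat R p (I.comap (algebraMap R (Localization T))) := by
  intro e he φ hφ x hx
  have hq : p ^ e ≠ 0 := pow_ne_zero e (Fact.out : p.Prime).ne_zero
  have hmem := hI e he _ (hφ.isPeLinear_localization (T := T) hq) _ hx
  rwa [hφ.localization_algebraMap hq] at hmem

/-- The contraction to `R` of a uniformly `F`-compatible ideal of a localization of an
`F`-finite ring `R` of characteristic `p > 0` is uniformly `F`-compatible. -/
theorem unifFCompat_comap_localization {R : Type*} [CommRing R] (p : ℕ) [Fact p.Prime]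
    [CharP R p] (hFF : FFinite R p) (T : Submonoid R) (I : Ideal (Localization T))
    (hI : UnifFCompat (Localization T) p I) :
    UnifFCompat R p (I.comap (algebraMap R (Localization T))) :=
  unifFCompat_comap_localization_general p T I hI
end

section
/- Let (R, 𝔪) be an F-finite F-pure reduced local ring, and define the splitting prime 𝒫 to be the set of c ∈ R such that for every e > 0 the R-linear map R → F^e_* R sending 1 to c does not split. Then 𝒫 is the unique largest center of F-purity of R: every uniformly F-compatible prime ideal of R is contained in 𝒫. -/
/-- `R` is `F`-split (`F`-pure): some `R`-linear map `F^e_* R → R` sends `1` to `1`. -/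
def FSplit (R : Type*) [CommRing R] (p : ℕ) : Prop :=
  ∃ e : ℕ, 0 < e ∧ ∃ φ : R → R, IsPeLinear R (p ^ e) φ ∧ φ 1 = 1

/-!
In a local ring, `R → F^e_* R, 1 ↦ c` splits as soon as some `p^e`-linear `φ` sends `c` to a
unit, so the splitting prime is the set of `c` that every such `φ` sends into `𝔪`; this is an
ideal because the maps `x ↦ φ (r * x)` are again `p^e`-linear. Composing a `p^e`-linear map with
a `p^e'`-linear one gives a `p^(e+e')`-linear map, which yields both uniform `F`-compatibility
and primality: if `φ a = 1` and `ψ b = 1`, then `ψ (φ (b ^ p^e * a)) = ψ (b * φ a) = 1`, so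
`a * b ∉ 𝒫`. Finally, a proper uniformly `F`-compatible ideal cannot contain a `c` with
`φ c = 1`.
-/

open IsLocalRing

namespace IsPeLinear

variable {R : Type*} [CommRing R] {q q' : ℕ} {φ ψ : R → R}

lemma map_zero (hφ : IsPeLinear R q φ) : φ 0 = 0 := by
  simpa using hφ.1 0 0

lemma comp (hφ : IsPeLinear R q φ) (hψ : IsPeLinear R q' ψ) :
    IsPeLinear R (q * q') (ψ ∘ φ) := by
  refine ⟨fun x y => by simp only [Function.comp, hφ.1, hψ.1], fun r x => ?_⟩
  simp only [Function.comp, mul_comm q, pow_mul, hφ.2, hψ.2]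

lemma const_mul (hφ : IsPeLinear R q φ) (a : R) : IsPeLinear R q (fun x => a * φ x) :=
  ⟨fun x y => by dsimp only; rw [hφ.1, mul_add],
    fun r x => by dsimp only; rw [hφ.2, mul_left_comm]⟩

lemma comp_mul_left (hφ : IsPeLinear R q φ) (a : R) : IsPeLinear R q (fun x => φ (a * x)) :=
  ⟨fun x y => by dsimp only; rw [mul_add, hφ.1],
    fun r x => by dsimp only; rw [mul_left_comm, hφ.2]⟩

end IsPeLinear

section SplittingPrime

variable (R : Type*) [CommRing R] [IsLocalRing R] (p : ℕ)

def splittingPrime : Ideal R where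
  carrier :=
    {c | ∀ e, 0 < e → ∀ φ : R → R, IsPeLinear R (p ^ e) φ → φ c ∈ maximalIdeal R}
  zero_mem' e _ φ hφ := by rw [hφ.map_zero]; exact zero_mem _
  add_mem' ha hb e he φ hφ := by rw [hφ.1]; exact add_mem (ha e he φ hφ) (hb e he φ hφ)
  smul_mem' r _ hc e he φ hφ := hc e he _ (hφ.comp_mul_left r)

variable {R p}

lemma notMem_splittingPrime_iff {c : R} :
    c ∉ splittingPrime R p ↔
      ∃ e, 0 < e ∧ ∃ φ : R → R, IsPeLinear R (p ^ e) φ ∧ φ c = 1 := by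
  simp only [splittingPrime, Submodule.mem_mk, AddSubmonoid.mem_mk, AddSubsemigroup.mem_mk,
    Set.mem_ofPred_eq, mem_maximalIdeal, mem_nonunits_iff, not_forall, not_not, exists_prop]
  constructor
  · rintro ⟨e, he, φ, hφ, u, hu⟩
    exact ⟨e, he, _, hφ.const_mul ↑u⁻¹, by rw [← hu, Units.inv_mul]⟩
  · rintro ⟨e, he, φ, hφ, h1⟩
    exact ⟨e, he, φ, hφ, h1 ▸ isUnit_one⟩

lemma coe_splittingPrime :
    (splittingPrime R p : Set R) =
      {c | ∀ e, 0 < e → ¬ ∃ φ : R → R, IsPeLinear R (p ^ e) φ ∧ φ c = 1} := by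
  ext c
  rw [SetLike.mem_coe, ← not_not (a := c ∈ _), notMem_splittingPrime_iff]
  simp only [Set.mem_ofPred_eq, not_exists, not_and]

lemma map_mem_splittingPrime {e : ℕ} (he : 0 < e) {φ : R → R} (hφ : IsPeLinear R (p ^ e) φ)
    {c : R} (hc : c ∈ splittingPrime R p) : φ c ∈ splittingPrime R p := fun e' _ ψ hψ =>
  hc (e + e') (Nat.add_pos_left he e') (ψ ∘ φ) (pow_add p e e' ▸ hφ.comp hψ)

lemma unifFCompat_splittingPrime : UnifFCompat R p (splittingPrime R p) :=
  fun _ he _ hφ _ => map_mem_splittingPrime he hφ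

lemma splittingPrime_ne_top (hpure : FSplit R p) : splittingPrime R p ≠ ⊤ :=
  (Ideal.ne_top_iff_one _).mpr (notMem_splittingPrime_iff.mpr hpure)

lemma splittingPrime_isPrime [Fact p.Prime] (hpure : FSplit R p) :
    (splittingPrime R p).IsPrime := by
  refine ⟨splittingPrime_ne_top hpure, fun {a b} hab => ?_⟩
  by_contra! hcon
  obtain ⟨e, he, φ, hφ, hφa⟩ := notMem_splittingPrime_iff.mp hcon.1
  obtain ⟨e', he', ψ, hψ, hψb⟩ := notMem_splittingPrime_iff.mp hcon.2
  have hq : p ^ e = p ^ e - 1 + 1 :=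
    (Nat.sub_add_cancel (Nat.one_le_pow _ _ (Fact.out : p.Prime).pos)).symm
  have hmem : b ^ p ^ e * a ∈ splittingPrime R p := by
    rw [hq, pow_succ, mul_assoc, mul_comm b a]
    exact Ideal.mul_mem_left _ _ hab
  have hsplit : ψ (φ (b ^ p ^ e * a)) = 1 := by rw [hφ.2, hφa, mul_one, hψb]
  exact notMem_splittingPrime_iff.mpr
    ⟨e + e', Nat.add_pos_left he e', ψ ∘ φ, pow_add p e e' ▸ hφ.comp hψ, hsplit⟩ hmem

lemma le_splittingPrime {Q : Ideal R} (hQ : Q ≠ ⊤) (hQc : UnifFCompat R p Q) :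
    Q ≤ splittingPrime R p := by
  intro c hc
  by_contra hcP
  obtain ⟨e, he, φ, hφ, h1⟩ := notMem_splittingPrime_iff.mp hcP
  exact hQ ((Ideal.eq_top_iff_one Q).mpr (h1 ▸ hQc e he φ hφ c hc))

end SplittingPrime

theorem splittingPrime_largest_center_general {R : Type*} [CommRing R] [IsLocalRing R] (p : ℕ)
    [Fact p.Prime] (hpure : FSplit R p) :
    ∃ P : Ideal R,
      (P : Set R) = {c : R | ∀ e : ℕ, 0 < e →
        ¬ ∃ φ : R → R, IsPeLinear R (p ^ e) φ ∧ φ c = 1} ∧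
      P.IsPrime ∧ UnifFCompat R p P ∧
      ∀ Q : Ideal R, Q.IsPrime → UnifFCompat R p Q → Q ≤ P :=
  ⟨splittingPrime R p, coe_splittingPrime, splittingPrime_isPrime hpure,
    unifFCompat_splittingPrime, fun _ hQ hQc => le_splittingPrime hQ.ne_top hQc⟩

/-- Aberbach–Enescu'\''s splitting prime: in an `F`-finite `F`-pure reduced local ring
`(R,𝔪)`, the set `𝒫` of `c ∈ R` such that no map `R → F^e_* R`, `1 ↦ c`, splits is the
unique largest center of `F`-purity: it is a uniformly `F`-compatible prime ideal
containing every uniformly `F`-compatible prime ideal of `R`. -/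
theorem splittingPrime_largest_center {R : Type*} [CommRing R] [IsLocalRing R] (p : ℕ)
    [Fact p.Prime] [CharP R p] [IsReduced R] (hFF : FFinite R p) (hpure : FSplit R p) :
    ∃ P : Ideal R,
      (P : Set R) = {c : R | ∀ e : ℕ, 0 < e →
        ¬ ∃ φ : R → R, IsPeLinear R (p ^ e) φ ∧ φ c = 1} ∧
      P.IsPrime ∧ UnifFCompat R p P ∧
      ∀ Q : Ideal R, Q.IsPrime → UnifFCompat R p Q → Q ≤ P :=
  splittingPrime_largest_center_general p hpure
end

section
/- Let R be a reduced F-finite ring of characteristic p > 0 with normalization R^N inside its total ring of fractions. Then the conductor ideal I = Ann_R(R^N/R) = {x ∈ R : x R^N ⊆ R} is uniformly F-compatible: for every e > 0 and every R-linear map φ : F^e_* R → R, one has φ(F^e_* I) ⊆ I. -/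
/-!
For `y ∈ Rᴺ` also `y ^ q ∈ Rᴺ` (`q = p ^ e`), so `x * y ^ q = r` lies in `R` when `x` is in the
conductor. Writing `y = a / s` this reads `x * a ^ q = r * s ^ q` in `R`, and applying `φ` gives
`a * φ x = s * φ r`, i.e. `φ x * y = φ r ∈ R`.
-/

theorem mul_apply_eq_of_mul_pow_eq {R : Type*} [CommRing R] {q : ℕ} {φ : R → R}
    (hφ : ∀ r x : R, φ (r ^ q * x) = r * φ x) {x r a s : R} (h : x * a ^ q = r * s ^ q) :
    a * φ x = s * φ r := by
  rw [← hφ, ← hφ, mul_comm (a ^ q), mul_comm (s ^ q), h]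

theorem algebraMap_apply_mul_eq_of_mul_pow_eq {R K : Type*} [CommRing R] [CommRing K]
    [Algebra R K] [IsFractionRing R K] {q : ℕ} {φ : R → R}
    (hφ : ∀ r x : R, φ (r ^ q * x) = r * φ x) {x r : R} {y : K}
    (h : algebraMap R K x * y ^ q = algebraMap R K r) :
    algebraMap R K (φ x) * y = algebraMap R K (φ r) := by
  obtain ⟨⟨a, s⟩, rfl⟩ := IsLocalization.mk'_surjective (nonZeroDivisors R) y
  have hy : IsLocalization.mk' K a s * algebraMap R K s = algebraMap R K a :=
    IsLocalization.mk'_spec K a s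
  have hcleared : x * a ^ q = r * (s : R) ^ q := by
    apply IsFractionRing.injective R K
    simp only [map_mul, map_pow, ← hy, ← h]
    ring
  apply (IsLocalization.map_units K s).mul_left_cancel
  rw [← map_mul, ← mul_apply_eq_of_mul_pow_eq hφ hcleared, map_mul, ← hy]
  ring

theorem conductor_unifFCompat_general {R : Type*} [CommRing R] (p : ℕ) (I : Ideal R)
    (hI : ∀ x : R, x ∈ I ↔ ∀ y ∈ integralClosure R (FractionRing R),
      algebraMap R (FractionRing R) x * y ∈ (algebraMap R (FractionRing R)).range) :
    UnifFCompat R p I := by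
  intro e _ φ hφ x hx
  rw [hI]
  intro y hy
  obtain ⟨r, hr⟩ := (hI x).1 hx (y ^ p ^ e) (pow_mem hy _)
  exact ⟨φ r, (algebraMap_apply_mul_eq_of_mul_pow_eq hφ.2 hr.symm).symm⟩

/-- The conductor ideal `I = {x ∈ R : x·Rᴺ ⊆ R}` of a reduced `F`-finite ring `R` of
characteristic `p > 0` in its normalization `Rᴺ` (the integral closure of `R` in its
total ring of fractions) is uniformly `F`-compatible. -/
theorem conductor_unifFCompat {R : Type*} [CommRing R] (p : ℕ) [Fact p.Prime]
    [CharP R p] [IsReduced R] (hFF : FFinite R p) (I : Ideal R)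
    (hI : ∀ x : R, x ∈ I ↔ ∀ y ∈ integralClosure R (FractionRing R),
      algebraMap R (FractionRing R) x * y ∈ (algebraMap R (FractionRing R)).range) :
    UnifFCompat R p I :=
  conductor_unifFCompat_general p I hI
end

section
/- Let R be a reduced F-finite ring of characteristic p > 0 and I ⊆ R a uniformly F-compatible ideal. Then the radical √I is also uniformly F-compatible. -/
/-!
If `φ(J) ⊆ J` then also `φ(J : s) ⊆ (J : s)`, because `φ(t) s = φ(s^q t)`. Now let `x^(n+1) ∈ J`.
Then `x^n ∈ J : x`, so by induction on `n` (for all `J` at once) `φ(x)^m x ∈ J` for some `m`, i.e.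
`x ∈ J : φ(x)^m`; applying `φ` to this gives `φ(x)^(m+1) ∈ J`.
-/

namespace IsPeLinear

variable {R : Type*} [CommRing R] {q : ℕ} {φ : R → R}

theorem mapsTo_colon (hφ : IsPeLinear R q φ) {J : Ideal R} (hJ : Set.MapsTo φ J J) (s : R) :
    Set.MapsTo φ (J.colon (Ideal.span {s})) (J.colon (Ideal.span {s})) := by
  intro t ht
  simp only [SetLike.mem_coe, Ideal.mem_colon_span_singleton] at ht ⊢
  obtain _ | q := q
  · have hφt : φ t = 0 := by simpa using hφ.2 0 t
    simp [hφt]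
  · have hφts : φ t * s = φ (s ^ q * (t * s)) := by
      rw [mul_comm, ← hφ.2]
      congr 1
      ring
    exact hφts ▸ hJ (J.mul_mem_left _ ht)

theorem mem_radical_of_pow_mem (hφ : IsPeLinear R q φ) {J : Ideal R} (hJ : Set.MapsTo φ J J)
    {x : R} {n : ℕ} (hx : x ^ n ∈ J) : φ x ∈ J.radical := by
  induction n generalizing J with
  | zero =>
    rw [(J.eq_top_iff_one).2 (by simpa using hx), Ideal.radical_top]
    trivial
  | succ n ih =>
    obtain ⟨m, hm⟩ := ih (hφ.mapsTo_colon hJ x)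
      (Ideal.mem_colon_span_singleton.2 (by rwa [← pow_succ]))
    have hx_colon : x ∈ J.colon (Ideal.span {φ x ^ m}) :=
      Ideal.mem_colon_span_singleton.2 (by rwa [mul_comm, ← Ideal.mem_colon_span_singleton])
    have hφx := hφ.mapsTo_colon hJ (φ x ^ m) hx_colon
    exact ⟨m + 1, by rwa [pow_succ', ← Ideal.mem_colon_span_singleton]⟩

theorem mapsTo_radical (hφ : IsPeLinear R q φ) {J : Ideal R} (hJ : Set.MapsTo φ J J) :
    Set.MapsTo φ J.radical J.radical :=
  fun _ ⟨_, hn⟩ => hφ.mem_radical_of_pow_mem hJ hn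

end IsPeLinear

theorem radical_unifFCompat_general {R : Type*} [CommRing R] (p : ℕ) (I : Ideal R)
    (hI : UnifFCompat R p I) :
    UnifFCompat R p I.radical :=
  fun e he _ hφ => hφ.mapsTo_radical (hI e he _ hφ)

/-- The radical of a uniformly `F`-compatible ideal of a reduced `F`-finite ring of
characteristic `p > 0` is uniformly `F`-compatible. -/
theorem radical_unifFCompat {R : Type*} [CommRing R] (p : ℕ) [Fact p.Prime]
    [CharP R p] [IsReduced R] (hFF : FFinite R p) (I : Ideal R)
    (hI : UnifFCompat R p I) :
    UnifFCompat R p I.radical :=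
  radical_unifFCompat_general p I hI
end

section
/- Let R be a reduced F-finite ring of characteristic p > 0 and I ⊆ R a radical uniformly F-compatible ideal. Then every minimal prime P of I is uniformly F-compatible (i.e., a center of F-purity). -/
/-!
`P R_P` is the radical of `I R_P`, and `I` is radical, so every `x ∈ P` satisfies `s x ∈ I` for
some `s ∉ P`. For `φ` with `φ(r^q y) = r φ(y)` this gives `s φ(x) = φ(s^q x) ∈ I ⊆ P`, hence
`φ(x) ∈ P` as `P` is prime.
-/

namespace Ideal

variable {R : Type*} [CommRing R] {I P : Ideal R}

theorem exists_notMem_mul_pow_mem_of_mem_minimalPrimes (hP : P ∈ I.minimalPrimes) {x : R}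
    (hx : x ∈ P) : ∃ s ∉ P, ∃ n : ℕ, s * x ^ n ∈ I := by
  have := hP.isPrime
  have hxI : algebraMap R (Localization.AtPrime P) x ∈ (I.map (algebraMap R _)).radical := by
    rw [IsLocalization.AtPrime.radical_map_of_mem_minimalPrimes _ P I hP]
    exact mem_map_of_mem _ hx
  obtain ⟨n, hn⟩ := hxI
  rw [← map_pow, IsLocalization.algebraMap_mem_map_algebraMap_iff P.primeCompl] at hn
  obtain ⟨s, hs, hsx⟩ := hn
  exact ⟨s, hs, n, hsx⟩

theorem exists_notMem_mul_mem_of_mem_minimalPrimes (hrad : I.radical = I)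
    (hP : P ∈ I.minimalPrimes) {x : R} (hx : x ∈ P) : ∃ s ∉ P, s * x ∈ I := by
  obtain ⟨s, hs, n, hsx⟩ := exists_notMem_mul_pow_mem_of_mem_minimalPrimes hP hx
  refine ⟨s, hs, hrad ▸ ⟨n + 1, ?_⟩⟩
  rw [show (s * x) ^ (n + 1) = s ^ n * x * (s * x ^ n) by ring]
  exact I.mul_mem_left _ hsx

end Ideal

namespace IsPeLinear

variable {R : Type*} [CommRing R] {q : ℕ} {φ : R → R}

theorem mul_map_mem (hφ : IsPeLinear R q φ) (hq : q ≠ 0) {I : Ideal R}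
    (hI : ∀ y ∈ I, φ y ∈ I) {s x : R} (hsx : s * x ∈ I) : s * φ x ∈ I := by
  rw [← hφ.2, ← Nat.succ_pred_eq_of_ne_zero hq, pow_succ, mul_assoc]
  exact hI _ (I.mul_mem_left _ hsx)

theorem map_mem_of_mem_minimalPrimes (hφ : IsPeLinear R q φ) (hq : q ≠ 0) {I P : Ideal R}
    (hrad : I.radical = I) (hI : ∀ y ∈ I, φ y ∈ I) (hP : P ∈ I.minimalPrimes) {x : R}
    (hx : x ∈ P) : φ x ∈ P := by
  obtain ⟨s, hs, hsx⟩ := Ideal.exists_notMem_mul_mem_of_mem_minimalPrimes hrad hP hx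
  exact (hP.isPrime.mem_or_mem (hP.le (hφ.mul_map_mem hq hI hsx))).resolve_left hs

end IsPeLinear

theorem minimalPrime_unifFCompat_general {R : Type*} [CommRing R] (p : ℕ) [Fact p.Prime]
    (I : Ideal R)
    (hrad : I.radical = I) (hI : UnifFCompat R p I)
    (P : Ideal R) (hP : P ∈ I.minimalPrimes) :
    UnifFCompat R p P := fun e he φ hφ _ hx ↦
  hφ.map_mem_of_mem_minimalPrimes (pow_ne_zero e (Fact.out : p.Prime).ne_zero) hrad
    (hI e he φ hφ) hP hx

/-- Every minimal prime `P` of a radical uniformly `F`-compatible ideal `I` of a reduced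
`F`-finite ring of characteristic `p > 0` is uniformly `F`-compatible (a center of
`F`-purity). -/
theorem minimalPrime_unifFCompat {R : Type*} [CommRing R] (p : ℕ) [Fact p.Prime]
    [CharP R p] [IsReduced R] (hFF : FFinite R p) (I : Ideal R)
    (hrad : I.radical = I) (hI : UnifFCompat R p I)
    (P : Ideal R) (hP : P ∈ I.minimalPrimes) :
    UnifFCompat R p P :=
  minimalPrime_unifFCompat_general p I hrad hI P hP
end
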